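/- Let α ∈ ℝ, ω > 0, let t₁ < t₂ < … < t_k be real numbers (event times) with real weights c₁, …, c_k, and define x(t) = α + Σ_{i : tᵢ < t} cᵢ·e^{−ω(t − tᵢ)}. Then on any open interval J ⊆ ℝ containing none of the event times t₁, …, t_k, the function x is differentiable and satisfies x'(t) = ω·(α − x(t)) for all t ∈ J. -/

import Mathlib

open Finset Set Filter Topology

/-- On an interval free of event times the set `S` of past events is constant, and `x` agrees
there with this finite sum of decaying exponentials. -/
noncomputable def expRelaxation {ι : Type*} (S : Finset ι) (α ω : ℝ) (τ c : ι → ℝ) (s : ℝ) : ℝ :=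
  α + ∑ i ∈ S, c i * Real.exp (-ω * (s - τ i))

theorem hasDerivAt_expRelaxation {ι : Type*} (S : Finset ι) (α ω : ℝ) (τ c : ι → ℝ) (t : ℝ) :
    HasDerivAt (expRelaxation S α ω τ c) (ω * (α - expRelaxation S α ω τ c t)) t := by
  have hterm : ∀ i ∈ S, HasDerivAt (fun s => c i * Real.exp (-ω * (s - τ i)))
      (c i * (Real.exp (-ω * (t - τ i)) * -ω)) t := fun i _ =>
    ((((hasDerivAt_id' t).sub_const (τ i)).const_mul (-ω)).congr_deriv (mul_one _)).exp.const_mul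
      (c i)
  refine ((HasDerivAt.fun_sum hterm).const_add α).congr_deriv ?_
  rw [expRelaxation, sub_add_cancel_left, mul_neg, Finset.mul_sum, ← Finset.sum_neg_distrib]
  exact Finset.sum_congr rfl fun i _ => by ring

theorem lt_iff_lt_of_notMem_Ioo {α : Type*} [LinearOrder α] {p a b s t : α}
    (hp : p ∉ Ioo a b) (hs : s ∈ Ioo a b) (ht : t ∈ Ioo a b) : p < s ↔ p < t := by
  rcases le_or_gt p a with hpa | hap
  · exact ⟨fun _ => hpa.trans_lt ht.1, fun _ => hpa.trans_lt hs.1⟩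
  · have hbp : b ≤ p := le_of_not_gt fun hpb => hp ⟨hap, hpb⟩
    exact ⟨fun h => absurd (h.trans hs.2) hbp.not_gt, fun h => absurd (h.trans ht.2) hbp.not_gt⟩

theorem stmt_13_general (α ω : ℝ) (k : ℕ)
    (tev : Fin k → ℝ)
    (c : Fin k → ℝ)
    (x : ℝ → ℝ)
    (hx : ∀ t, x t = α + ∑ i, if tev i < t then c i * Real.exp (-ω * (t - tev i)) else 0)
    (a b : ℝ)
    (hno : ∀ i, tev i ∉ Set.Ioo a b) :
    ∀ t ∈ Set.Ioo a b, HasDerivAt x (ω * (α - x t)) t := by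
  intro t ht
  set S := univ.filter fun i => tev i < t
  have hxS : ∀ s ∈ Ioo a b, x s = expRelaxation S α ω tev c s := fun s hs => by
    rw [hx, expRelaxation, Finset.sum_filter]
    congr 1
    exact Finset.sum_congr rfl fun i _ => if_congr (lt_iff_lt_of_notMem_Ioo (hno i) hs ht) rfl rfl
  rw [hxS t ht]
  exact (hasDerivAt_expRelaxation S α ω tev c t).congr_of_eventuallyEq
    (eventually_of_mem (Ioo_mem_nhds ht.1 ht.2) hxS)

/-- Deterministic core of Proposition 1 of the paper: between events, the opinion
`x(t) = α + Σ_{tᵢ < t} cᵢ·e^{−ω(t−tᵢ)}` is differentiable with `x'(t) = ω(α − x(t))` on any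
open interval containing no event time. -/
theorem stmt_13 (α ω : ℝ) (hω : 0 < ω) (k : ℕ)
    (tev : Fin k → ℝ) (htev : StrictMono tev)
    (c : Fin k → ℝ)
    (x : ℝ → ℝ)
    (hx : ∀ t, x t = α + ∑ i, if tev i < t then c i * Real.exp (-ω * (t - tev i)) else 0)
    (a b : ℝ)
    (hno : ∀ i, tev i ∉ Set.Ioo a b) :
    ∀ t ∈ Set.Ioo a b, HasDerivAt x (ω * (α - x t)) t :=
  stmt_13_general α ω k tev c x hx a b hno
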